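/- If u, v are C² functions related by (λ−1)v₂ − u₂v₃ = 0 and λv₁ − u₁v₃ = 0 for a constant λ ∉ {0,1}, with v₃ nonvanishing, then cross-differentiation (v₁₂ = v₂₁) implies that u satisfies u₁₂ + u₂u₁₃ − u₁u₂₃ = 0 wherever v₃ ≠ 0. -/

import Mathlib

/-! Differentiating the first relation in `x¹` and `x³` and the second in `x²` and `x³`
gives four equations, linear in the second derivatives of `v`. By symmetry of second
derivatives, the combination `(λ−1)·∂₂(λv₁) − λ·∂₁((λ−1)v₂)` eliminates `v₁₂`, and
substituting `λv₁₃` and `(λ−1)v₂₃` from the other two leaves `v₃ · (u₁₂ + u₂u₁₃ − u₁u₂₃) = 0`. -/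

/-- Partial derivative in the `i`-th coordinate direction. -/
noncomputable def pd (i : Fin 3) (f : (Fin 3 → ℝ) → ℝ) (x : Fin 3 → ℝ) : ℝ :=
  fderiv ℝ f x (Pi.single i 1)

section PartialDerivative

variable {f g : (Fin 3 → ℝ) → ℝ} {x : Fin 3 → ℝ}

lemma pd_sub (hf : DifferentiableAt ℝ f x) (hg : DifferentiableAt ℝ g x) (i : Fin 3) :
    pd i (fun y => f y - g y) x = pd i f x - pd i g x := by
  simp [pd, fderiv_fun_sub hf hg]

lemma pd_const_mul (hf : DifferentiableAt ℝ f x) (c : ℝ) (i : Fin 3) :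
    pd i (fun y => c * f y) x = c * pd i f x := by
  simp [pd, fderiv_const_mul hf]

lemma pd_mul (hf : DifferentiableAt ℝ f x) (hg : DifferentiableAt ℝ g x) (i : Fin 3) :
    pd i (fun y => f y * g y) x = pd i f x * g x + f x * pd i g x := by
  simp only [pd, fderiv_fun_mul hf hg, add_apply, smul_apply, smul_eq_mul]
  ring

lemma pd_const (c : ℝ) (i : Fin 3) : pd i (fun _ => c) x = 0 := by
  simp [pd]

lemma ContDiff.differentiable_pd (hf : ContDiff ℝ 2 f) (i : Fin 3) :
    Differentiable ℝ (pd i f) :=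
  ((hf.fderiv_right (m := 1) (by norm_num)).differentiable (by norm_num)).clm_apply
    (differentiable_const _)

lemma ContDiff.pd_pd_eq_fderiv_fderiv (hf : ContDiff ℝ 2 f) (i j : Fin 3) :
    pd j (pd i f) x = fderiv ℝ (fderiv ℝ f) x (Pi.single j 1) (Pi.single i 1) := by
  have hdf : DifferentiableAt ℝ (fderiv ℝ f) x :=
    (hf.fderiv_right (m := 1) (by norm_num)).differentiable (by norm_num) x
  change fderiv ℝ (fun y => fderiv ℝ f y (Pi.single i 1)) x (Pi.single j 1) = _
  simp [fderiv_clm_apply hdf (differentiableAt_const _)]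

lemma ContDiff.pd_pd_comm (hf : ContDiff ℝ 2 f) (i j : Fin 3) :
    pd i (pd j f) x = pd j (pd i f) x := by
  rw [hf.pd_pd_eq_fderiv_fderiv, hf.pd_pd_eq_fderiv_fderiv]
  exact (hf.contDiffAt.isSymmSndFDerivAt (by simp)).eq _ _

end PartialDerivative

lemma const_mul_pd_pd_eq_of_forall_eq_zero {u v : (Fin 3 → ℝ) → ℝ}
    (hu : ContDiff ℝ 2 u) (hv : ContDiff ℝ 2 v) {c : ℝ} {i k : Fin 3}
    (h : ∀ x, c * pd i v x - pd i u x * pd k v x = 0) (j : Fin 3) (x : Fin 3 → ℝ) :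
    c * pd j (pd i v) x = pd j (pd i u) x * pd k v x + pd i u x * pd j (pd k v) x := by
  have hd := congrArg (pd j · x) (funext h)
  simp only [pd_const] at hd
  rw [pd_sub (g := fun y => pd i u y * pd k v y) ((hv.differentiable_pd i x).const_mul c)
      ((hu.differentiable_pd i x).mul (hv.differentiable_pd k x)),
    pd_const_mul (hv.differentiable_pd i x),
    pd_mul (hu.differentiable_pd i x) (hv.differentiable_pd k x)] at hd
  linarith

theorem backlund_11_22_general
    (l : ℝ)
    (u v : (Fin 3 → ℝ) → ℝ)
    (hu : ContDiff ℝ 2 u) (hv : ContDiff ℝ 2 v)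
    (hv3 : ∀ x, pd 2 v x ≠ 0)
    (h1 : ∀ x, (l - 1) * pd 1 v x - pd 1 u x * pd 2 v x = 0)
    (h2 : ∀ x, l * pd 0 v x - pd 0 u x * pd 2 v x = 0) :
    ∀ x, pd 0 (pd 1 u) x + pd 1 u x * pd 0 (pd 2 u) x
        - pd 0 u x * pd 1 (pd 2 u) x = 0 := by
  intro x
  have e10 := const_mul_pd_pd_eq_of_forall_eq_zero hu hv h1 0 x
  have e12 := const_mul_pd_pd_eq_of_forall_eq_zero hu hv h1 2 x
  have e21 := const_mul_pd_pd_eq_of_forall_eq_zero hu hv h2 1 x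
  have e22 := const_mul_pd_pd_eq_of_forall_eq_zero hu hv h2 2 x
  have symm_u := hu.pd_pd_comm (x := x)
  have symm_v := hv.pd_pd_comm (x := x)
  have key : pd 2 v x *
      (pd 0 (pd 1 u) x + pd 1 u x * pd 0 (pd 2 u) x - pd 0 u x * pd 1 (pd 2 u) x) = 0 := by
    linear_combination (l - 1) * e21 - l * e10 + pd 0 u x * e12 - pd 1 u x * e22
      - l * (l - 1) * symm_v 1 0 - (l - 1) * pd 0 u x * symm_v 2 1 - l * pd 1 u x * symm_v 0 2
      + (l - 1) * pd 2 v x * symm_u 1 0 + pd 2 v x * pd 1 u x * symm_u 0 2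
      - pd 2 v x * pd 0 u x * symm_u 1 2
  exact (mul_eq_zero.mp key).resolve_left (hv3 x)

/-- Bäcklund transformation between Segre types `[(11)(22)]` and
`[(11)(11)(11)]`: if C² functions `u, v` satisfy `(λ−1)v₂ − u₂v₃ = 0` and
`λv₁ − u₁v₃ = 0` for a constant `λ ∉ {0,1}` with `v₃` nonvanishing, then
cross-differentiation (`v₁₂ = v₂₁`) implies `u₁₂ + u₂u₁₃ − u₁u₂₃ = 0`. -/
theorem backlund_11_22
    (l : ℝ) (hl0 : l ≠ 0) (hl1 : l ≠ 1)
    (u v : (Fin 3 → ℝ) → ℝ)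
    (hu : ContDiff ℝ 2 u) (hv : ContDiff ℝ 2 v)
    (hv3 : ∀ x, pd 2 v x ≠ 0)
    (h1 : ∀ x, (l - 1) * pd 1 v x - pd 1 u x * pd 2 v x = 0)
    (h2 : ∀ x, l * pd 0 v x - pd 0 u x * pd 2 v x = 0)
    (hmix : ∀ x, pd 0 (pd 1 v) x = pd 1 (pd 0 v) x) :
    ∀ x, pd 0 (pd 1 u) x + pd 1 u x * pd 0 (pd 2 u) x
        - pd 0 u x * pd 1 (pd 2 u) x = 0 :=
  backlund_11_22_general l u v hu hv hv3 h1 h2
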